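/- arXiv:2111.08796 — 2 statements merged into one kernel-verified Lean document; each statement's English description precedes it below -/
import Mathlib

section
/- The Beukers integral I_1 = (1/2) ∫_0^1∫_0^1∫_0^1 [x(1-x)y(1-y)z(1-z) / (1-(1-xy)z)^2] dx dy dz equals 5ζ(3) - 6. -/
open MeasureTheory Real Set

lemma ioo_eq (f : ℝ → ℝ) : ∫ x in Set.Ioo (0:ℝ) 1, f x = ∫ x in (0:ℝ)..1, f x := by
  rw [intervalIntegral.integral_of_le zero_le_one, MeasureTheory.integral_Ioc_eq_integral_Ioo]

lemma int_pow_one_sub (n : ℕ) :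
    ∫ x in (0:ℝ)..1, x ^ n * (1 - x) = 1/((n:ℝ)+1) - 1/((n:ℝ)+2) := by
  have : ∀ x : ℝ, x ^ n * (1 - x) = x ^ n - x ^ (n+1) := by intro x; ring
  simp_rw [this]
  rw [intervalIntegral.integral_sub (intervalIntegral.intervalIntegrable_pow n)
      (intervalIntegral.intervalIntegrable_pow (n+1)), integral_pow, integral_pow]
  push_cast
  ring

lemma pow_log_integrable (n : ℕ) :
    IntervalIntegrable (fun x : ℝ => x ^ n * Real.log x) volume 0 1 := by
  have hg : IntervalIntegrable (fun x : ℝ => 2 * x ^ (-(1/2) : ℝ)) volume 0 1 :=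
    (intervalIntegral.intervalIntegrable_rpow' (by norm_num)).const_mul 2
  refine hg.mono_fun ?_ ?_
  · apply ContinuousOn.aestronglyMeasurable ?_ measurableSet_uIoc
    have : Set.uIoc (0:ℝ) 1 ⊆ {0}ᶜ := by
      rw [Set.uIoc_of_le zero_le_one]
      intro x hx; exact ne_of_gt hx.1
    exact ((continuousOn_pow n).mul ((Real.continuousOn_log).mono this))
  · rw [Filter.EventuallyLE, ae_restrict_iff' measurableSet_uIoc]
    filter_upwards with x hx
    rw [Set.uIoc_of_le zero_le_one] at hx
    obtain ⟨hx0, hx1⟩ := hx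
    have h1 : |Real.log x| ≤ 2 * x ^ (-(1/2) : ℝ) := by
      rw [abs_of_nonpos (Real.log_nonpos hx0.le hx1)]
      have := Real.log_le_sub_one_of_pos (x := x ^ (-(1/2):ℝ)) (Real.rpow_pos_of_pos hx0 _)
      rw [Real.log_rpow hx0] at this
      nlinarith [Real.rpow_pos_of_pos hx0 (-(1/2):ℝ)]
    simp only [norm_mul, Real.norm_eq_abs]
    rw [abs_of_pos (two_pos : (0:ℝ) < 2), abs_of_pos (Real.rpow_pos_of_pos hx0 _)]
    calc |x ^ n| * |Real.log x| ≤ 1 * |Real.log x| := by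
          apply mul_le_mul_of_nonneg_right _ (abs_nonneg _)
          rw [abs_of_nonneg (pow_nonneg hx0.le n)]
          exact pow_le_one₀ hx0.le hx1
      _ ≤ 2 * x ^ (-(1/2):ℝ) := by rw [one_mul]; exact h1

lemma int_pow_log (n : ℕ) :
    ∫ x in (0:ℝ)..1, x ^ n * Real.log x = -(1/((n:ℝ)+1)^2) := by
  have hn : ((n:ℝ)+1) ≠ 0 := by positivity
  have key := intervalIntegral.integral_eq_sub_of_hasDerivAt_of_tendsto
    (f := fun x : ℝ => x^(n+1)*Real.log x/((n:ℝ)+1) - x^(n+1)/((n:ℝ)+1)^2)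
    (f' := fun x : ℝ => x ^ n * Real.log x)
    (a := 0) (b := 1) (fa := 0) (fb := -(1/((n:ℝ)+1)^2))
    (by norm_num) ?_ (pow_log_integrable n) ?_ ?_
  · rw [key]; ring
  · intro x hx
    have hx0 : x ≠ 0 := ne_of_gt hx.1
    have h1 : HasDerivAt (fun x : ℝ => x^(n+1)*Real.log x)
        (((n:ℝ)+1) * x ^ n * Real.log x + x ^ n) x := by
      have := (hasDerivAt_pow (n+1) x).mul (Real.hasDerivAt_log hx0)
      refine HasDerivAt.congr_deriv this ?_
      push_cast
      field_simp
      ring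
    have h2 : HasDerivAt (fun x : ℝ => x^(n+1)/((n:ℝ)+1)^2)
        (((n:ℝ)+1) * x ^ n / ((n:ℝ)+1)^2) x := by
      have := (hasDerivAt_pow (n+1) x).div_const (((n:ℝ)+1)^2)
      refine HasDerivAt.congr_deriv this ?_
      push_cast; ring
    have := (h1.div_const ((n:ℝ)+1)).sub h2
    refine HasDerivAt.congr_deriv this ?_
    field_simp
    ring
  · -- tendsto at 0+
    have h1 : Filter.Tendsto (fun x : ℝ => x^(n+1)*Real.log x) (nhdsWithin 0 (Set.Ioi 0)) (nhds 0) := by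
      have := tendsto_log_mul_rpow_nhdsGT_zero (r := (n:ℝ)+1) (by positivity)
      apply this.congr'
      filter_upwards [self_mem_nhdsWithin] with x (hx : (0:ℝ) < x)
      rw [← Real.rpow_natCast x (n+1)]
      push_cast
      ring
    have h2 : Filter.Tendsto (fun x : ℝ => x^(n+1)*Real.log x/((n:ℝ)+1) - x^(n+1)/((n:ℝ)+1)^2)
        (nhdsWithin 0 (Set.Ioi 0)) (nhds (0/((n:ℝ)+1) - 0^(n+1)/((n:ℝ)+1)^2)) := by
      apply Filter.Tendsto.sub (h1.div_const _)
      apply Filter.Tendsto.div_const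
      exact ((continuous_pow (n+1)).tendsto 0).mono_left nhdsWithin_le_nhds
    simpa using h2
  · -- tendsto at 1-
    have : Filter.Tendsto (fun x : ℝ => x^(n+1)*Real.log x/((n:ℝ)+1) - x^(n+1)/((n:ℝ)+1)^2)
        (nhdsWithin 1 (Set.Iio 1)) (nhds ((1:ℝ)^(n+1)*Real.log 1/((n:ℝ)+1) - 1^(n+1)/((n:ℝ)+1)^2)) := by
      apply Filter.Tendsto.mono_left _ nhdsWithin_le_nhds
      exact (((continuousAt_pow 1 (n+1)).mul (Real.continuousAt_log one_ne_zero)).div_const _ |>.sub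
        ((continuousAt_pow 1 (n+1)).div_const _)).tendsto
    simpa using this

lemma int_c (k : ℕ) :
    ∫ y in Set.Ioo (0:ℝ) 1, y ^ (k+1) * (1 - y) = 1/(((k:ℝ)+2)*((k:ℝ)+3)) := by
  rw [ioo_eq, int_pow_one_sub]
  push_cast
  have h2 : ((k:ℝ)+2) ≠ 0 := by positivity
  have h3 : ((k:ℝ)+3) ≠ 0 := by positivity
  field_simp
  ring

lemma int_d (k : ℕ) :
    ∫ y in Set.Ioo (0:ℝ) 1, y ^ (k+1) * (1 - y) * Real.log y
      = 1/((k:ℝ)+3)^2 - 1/((k:ℝ)+2)^2 := by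
  rw [ioo_eq]
  have : ∀ y : ℝ, y ^ (k+1) * (1-y) * Real.log y
      = y ^ (k+1) * Real.log y - y ^ (k+2) * Real.log y := by intro y; ring
  simp_rw [this]
  rw [intervalIntegral.integral_sub (pow_log_integrable (k+1)) (pow_log_integrable (k+2)),
    int_pow_log, int_pow_log]
  push_cast
  ring

lemma int_z {t : ℝ} (ht0 : 0 < t) (ht1 : t < 1) :
    ∫ z in Set.Ioo (0:ℝ) 1, z * (1-z) / (1 - t*z)^2
      = -((2-t)*Real.log (1-t) + 2*t)/t^3 := by
  have hne : ∀ z ∈ Set.uIcc (0:ℝ) 1, 1 - t*z ≠ 0 := by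
    intro z hz
    rw [Set.uIcc_of_le zero_le_one] at hz
    have : t * z < 1 := by nlinarith [hz.1, hz.2]
    linarith
  rw [ioo_eq]
  rw [intervalIntegral.integral_eq_sub_of_hasDerivAt
    (f := fun z : ℝ => -(1/t^3) * ((2-t)*Real.log (1-t*z) - (1-t*z) + (1-t)*(1-t*z)⁻¹))
    (f' := fun z : ℝ => z * (1-z)/(1-t*z)^2) ?_ ?_]
  · have hL : 1 - t*(1:ℝ) = 1 - t := by ring
    have ht3 : t^3 ≠ 0 := by positivity
    have h1t : (1:ℝ) - t ≠ 0 := by linarith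
    simp only [mul_one, mul_zero, sub_zero, Real.log_one, inv_one]
    field_simp
    ring
  · intro z hz
    have hz' := hne z hz
    have hu : HasDerivAt (fun z : ℝ => 1 - t*z) (-t) z := by
      simpa using ((hasDerivAt_id z).const_mul t).const_sub 1
    have hlog := hu.log hz'
    have hinv := hu.inv hz'
    have := (((hlog.const_mul (2-t)).sub hu).add (hinv.const_mul (1-t))).const_mul (-(1/t^3))
    refine HasDerivAt.congr_deriv this ?_
    field_simp
    ring
  · apply ContinuousOn.intervalIntegrable
    apply ContinuousOn.div
    · fun_prop
    · fun_prop
    · intro z hz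
      exact pow_ne_zero 2 (hne z hz)

lemma hs1 {r : ℝ} (h0 : 0 < r) (h1 : r < 1) :
    HasSum (fun k : ℕ => ((k:ℝ)+1) * r^k) (1/(1-r)^2) := by
  have hr : ‖r‖ < 1 := by rw [Real.norm_eq_abs, abs_of_pos h0]; exact h1
  have h := hasSum_choose_mul_geometric_of_norm_lt_one (𝕜 := ℝ) 1 hr
  have hf : (fun k : ℕ => (((k+1).choose 1 : ℕ) : ℝ) * r^k) = fun k : ℕ => ((k:ℝ)+1) * r^k := by
    funext k
    rw [Nat.choose_one_right]
    push_cast; ring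
  rw [hf] at h
  exact h

lemma hs2 {r : ℝ} (h0 : 0 < r) (h1 : r < 1) :
    HasSum (fun k : ℕ => ((k:ℝ)+1)^2 * r^k) ((1+r)/(1-r)^3) := by
  have hr : ‖r‖ < 1 := by rw [Real.norm_eq_abs, abs_of_pos h0]; exact h1
  have h2 := (hasSum_choose_mul_geometric_of_norm_lt_one (𝕜 := ℝ) 2 hr).mul_left 2
  have h3 := h2.sub (hs1 h0 h1)
  have h1r : (1:ℝ) - r ≠ 0 := by linarith
  have hf : (fun k : ℕ => 2 * ((((k+2).choose 2 : ℕ) : ℝ) * r^k) - ((k:ℝ)+1) * r^k)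
      = fun k : ℕ => ((k:ℝ)+1)^2 * r^k := by
    funext k
    have hc : (((k+2).choose 2 : ℕ) : ℝ) = ((k:ℝ)+1)*((k:ℝ)+2)/2 := by
      rw [Nat.cast_choose_two]
      push_cast
      ring
    rw [hc]
    ring
  rw [hf] at h3
  refine (congrArg (HasSum _) ?_).mpr h3
  field_simp
  ring

noncomputable def cc (k : ℕ) : ℝ := 1/(((k:ℝ)+2)*((k:ℝ)+3))
noncomputable def dd (k : ℕ) : ℝ := 1/((k:ℝ)+3)^2 - 1/((k:ℝ)+2)^2
noncomputable def FF (k : ℕ) (x y : ℝ) : ℝ :=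
  (x^(k+1)*(1-x)) * ((y^(k+1)*(1-y)) * (-2*((k:ℝ)+1) - ((k:ℝ)+1)^2*(Real.log x + Real.log y)))
noncomputable def GG (k : ℕ) (x : ℝ) : ℝ :=
  (x^(k+1)*(1-x)) * ((-2*((k:ℝ)+1) - ((k:ℝ)+1)^2*Real.log x) * cc k + (-((k:ℝ)+1)^2) * dd k)
noncomputable def inner1 (x y : ℝ) : ℝ :=
  x*(1-x)*y*(1-y) * (-((1+x*y)*Real.log (x*y) + 2*(1-x*y))/(1-x*y)^3)

lemma claimA {x y : ℝ} (hx : x ∈ Set.Ioo (0:ℝ) 1) (hy : y ∈ Set.Ioo (0:ℝ) 1) :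
    HasSum (fun k => FF k x y) (inner1 x y) := by
  obtain ⟨hx0, hx1⟩ := hx
  obtain ⟨hy0, hy1⟩ := hy
  have hr0 : 0 < x*y := mul_pos hx0 hy0
  have hr1 : x*y < 1 := by nlinarith
  have h1r : (1:ℝ) - x*y ≠ 0 := by linarith
  have h := ((hs1 hr0 hr1).mul_left (-2)).add ((hs2 hr0 hr1).mul_left (-(Real.log x + Real.log y)))
  have h' := h.mul_left (x*(1-x)*y*(1-y))
  have hf : (fun k : ℕ => x*(1-x)*y*(1-y) *
        (-2 * (((k:ℝ)+1) * (x*y)^k) + -(Real.log x + Real.log y) * (((k:ℝ)+1)^2 * (x*y)^k)))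
      = fun k => FF k x y := by
    funext k
    simp only [FF, mul_pow]
    ring
  rw [hf] at h'
  refine (congrArg (HasSum _) ?_).mpr h'
  simp only [inner1]
  rw [Real.log_mul (ne_of_gt hx0) (ne_of_gt hy0)]
  field_simp
  ring

lemma integrableOn_p (n : ℕ) :
    IntegrableOn (fun y : ℝ => y^(n+1)*(1-y)) (Set.Ioo 0 1) := by
  rw [← integrableOn_Ioc_iff_integrableOn_Ioo,
    ← intervalIntegrable_iff_integrableOn_Ioc_of_le zero_le_one]
  exact (by fun_prop : Continuous fun y : ℝ => y^(n+1)*(1-y)).intervalIntegrable 0 1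

lemma integrableOn_pl (n : ℕ) :
    IntegrableOn (fun y : ℝ => y^(n+1)*(1-y)*Real.log y) (Set.Ioo 0 1) := by
  rw [← integrableOn_Ioc_iff_integrableOn_Ioo,
    ← intervalIntegrable_iff_integrableOn_Ioc_of_le zero_le_one]
  have : ∀ y : ℝ, y^(n+1)*(1-y)*Real.log y = y^(n+1)*Real.log y - y^(n+2)*Real.log y := by
    intro y; ring
  simp_rw [this]
  exact (pow_log_integrable (n+1)).sub (pow_log_integrable (n+2))

lemma integrableOn_FF (k : ℕ) (x : ℝ) :
    IntegrableOn (fun y => FF k x y) (Set.Ioo 0 1) := by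
  have : (fun y => FF k x y) = fun y =>
      ((x^(k+1)*(1-x)) * (-2*((k:ℝ)+1) - ((k:ℝ)+1)^2*Real.log x)) * (y^(k+1)*(1-y))
      + ((x^(k+1)*(1-x)) * (-((k:ℝ)+1)^2)) * (y^(k+1)*(1-y)*Real.log y) := by
    funext y; simp only [FF]; ring
  rw [this]
  exact ((integrableOn_p k).const_mul _).add ((integrableOn_pl k).const_mul _)

lemma int_FF (k : ℕ) (x : ℝ) :
    ∫ y in Set.Ioo (0:ℝ) 1, FF k x y = GG k x := by
  have : (fun y => FF k x y) = fun y =>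
      ((x^(k+1)*(1-x)) * (-2*((k:ℝ)+1) - ((k:ℝ)+1)^2*Real.log x)) * (y^(k+1)*(1-y))
      + ((x^(k+1)*(1-x)) * (-((k:ℝ)+1)^2)) * (y^(k+1)*(1-y)*Real.log y) := by
    funext y; simp only [FF]; ring
  rw [this]
  rw [MeasureTheory.integral_add (((integrableOn_p k).const_mul _))
    ((integrableOn_pl k).const_mul _), integral_const_mul,
    integral_const_mul, int_c, int_d]
  simp only [GG, cc, dd]
  ring

lemma ee_int (k : ℕ) :
    ∫ y in Set.Ioo (0:ℝ) 1, y ^ (k+1) * (1-y) * (-Real.log y)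
      = 1/((k:ℝ)+2)^2 - 1/((k:ℝ)+3)^2 := by
  have : (fun y : ℝ => y ^ (k+1) * (1-y) * (-Real.log y))
      = fun y : ℝ => -(y ^ (k+1) * (1-y) * Real.log y) := by funext y; ring
  rw [this, MeasureTheory.integral_neg, int_d]
  ring

lemma cc_le_one (k : ℕ) : 1/(((k:ℝ)+2)*((k:ℝ)+3)) ≤ 1 := by
  rw [div_le_one (by positivity)]
  nlinarith [Nat.cast_nonneg (α := ℝ) k]

lemma ee_le_one (k : ℕ) : 1/((k:ℝ)+2)^2 - 1/((k:ℝ)+3)^2 ≤ 1 := by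
  have h1 : 1/((k:ℝ)+2)^2 ≤ 1 := by
    rw [div_le_one (by positivity)]
    nlinarith [Nat.cast_nonneg (α := ℝ) k]
  have h2 : 0 ≤ 1/((k:ℝ)+3)^2 := by positivity
  linarith

lemma norm_int_FF_le {x : ℝ} (hx : x ∈ Set.Ioo (0:ℝ) 1) (k : ℕ) :
    ∫ y in Set.Ioo (0:ℝ) 1, ‖FF k x y‖
      ≤ (2*((k:ℝ)+1) + ((k:ℝ)+1)^2*(|Real.log x|+1)) * x^(k+1) := by
  obtain ⟨hx0, hx1⟩ := hx
  set A : ℝ := 2*((k:ℝ)+1) + ((k:ℝ)+1)^2*|Real.log x| with hA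
  have hA0 : 0 ≤ A := by positivity
  have hnl : (fun y : ℝ => y ^ (k+1) * (1-y) * (-Real.log y))
      = fun y : ℝ => -(y ^ (k+1) * (1-y) * Real.log y) := by funext y; ring
  have hgint : IntegrableOn (fun y : ℝ =>
      x^(k+1) * (A * (y^(k+1)*(1-y)) + ((k:ℝ)+1)^2 * (y^(k+1)*(1-y)*(-Real.log y))))
      (Set.Ioo 0 1) := by
    apply MeasureTheory.Integrable.const_mul
    apply MeasureTheory.Integrable.add ((integrableOn_p k).const_mul _)
    apply MeasureTheory.Integrable.const_mul
    rw [hnl]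
    exact (integrableOn_pl k).neg
  have step1 : ∫ y in Set.Ioo (0:ℝ) 1, ‖FF k x y‖
      ≤ ∫ y in Set.Ioo (0:ℝ) 1,
        x^(k+1) * (A * (y^(k+1)*(1-y)) + ((k:ℝ)+1)^2 * (y^(k+1)*(1-y)*(-Real.log y))) := by
    apply MeasureTheory.setIntegral_mono_on (integrableOn_FF k x).norm hgint measurableSet_Ioo
    intro y hy
    obtain ⟨hy0, hy1⟩ := hy
    have hly : Real.log y ≤ 0 := Real.log_nonpos hy0.le hy1.le
    have hp0 : (0:ℝ) ≤ y^(k+1)*(1-y) := by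
      have : (0:ℝ) ≤ 1 - y := by linarith
      positivity
    have hxp : (0:ℝ) ≤ x^(k+1) := by positivity
    simp only [FF, Real.norm_eq_abs]
    rw [abs_mul, abs_mul (y ^ (k+1) * (1-y))]
    have ha : |x^(k+1)*(1-x)| ≤ x^(k+1) := by
      rw [abs_of_nonneg (by nlinarith : (0:ℝ) ≤ x^(k+1)*(1-x))]
      nlinarith
    have hpabs : |y^(k+1)*(1-y)| = y^(k+1)*(1-y) := abs_of_nonneg hp0
    have hw : |(-2*((k:ℝ)+1) - ((k:ℝ)+1)^2*(Real.log x + Real.log y))|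
        ≤ A + ((k:ℝ)+1)^2*(-Real.log y) := by
      have h1 : |(-2*((k:ℝ)+1) - ((k:ℝ)+1)^2*(Real.log x + Real.log y))|
          ≤ |(-2*((k:ℝ)+1) - ((k:ℝ)+1)^2*Real.log x)| + |((k:ℝ)+1)^2*Real.log y| := by
        have : (-2*((k:ℝ)+1) - ((k:ℝ)+1)^2*(Real.log x + Real.log y))
            = (-2*((k:ℝ)+1) - ((k:ℝ)+1)^2*Real.log x) + (-(((k:ℝ)+1)^2*Real.log y)) := by ring
        rw [this]
        refine (abs_add_le _ _).trans ?_
        rw [abs_neg]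
      refine h1.trans ?_
      have h2 : |(-2*((k:ℝ)+1) - ((k:ℝ)+1)^2*Real.log x)| ≤ A := by
        rw [hA]
        refine (abs_sub _ _).trans (le_of_eq ?_)
        have e1 : |(-2*((k:ℝ)+1))| = 2*((k:ℝ)+1) := by
          rw [abs_of_nonpos (by nlinarith [Nat.cast_nonneg (α := ℝ) k] : -2*((k:ℝ)+1) ≤ 0)]
          ring
        have e2 : |((k:ℝ)+1)^2*Real.log x| = ((k:ℝ)+1)^2*|Real.log x| := by
          rw [abs_mul, abs_of_nonneg (by positivity : (0:ℝ) ≤ ((k:ℝ)+1)^2)]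
        rw [e1, e2]
      have h3 : |((k:ℝ)+1)^2*Real.log y| = ((k:ℝ)+1)^2*(-Real.log y) := by
        rw [abs_mul, abs_of_nonneg (by positivity : (0:ℝ) ≤ ((k:ℝ)+1)^2),
          abs_of_nonpos hly]
      linarith
    rw [hpabs]
    calc |x^(k+1)*(1-x)| * ((y^(k+1)*(1-y)) * |(-2*((k:ℝ)+1) - ((k:ℝ)+1)^2*(Real.log x + Real.log y))|)
        ≤ x^(k+1) * ((y^(k+1)*(1-y)) * (A + ((k:ℝ)+1)^2*(-Real.log y))) := by
          apply mul_le_mul ha _ (by positivity) hxp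
          exact mul_le_mul_of_nonneg_left hw hp0
      _ = x^(k+1) * (A * (y^(k+1)*(1-y)) + ((k:ℝ)+1)^2 * (y^(k+1)*(1-y)*(-Real.log y))) := by ring
  refine step1.trans ?_
  rw [MeasureTheory.integral_const_mul, MeasureTheory.integral_add
    ((integrableOn_p k).const_mul _) (by
      have hnl2 : (fun y : ℝ => ((k:ℝ)+1)^2 * (y^(k+1)*(1-y)*(-Real.log y)))
          = fun y : ℝ => ((k:ℝ)+1)^2 * (-(y^(k+1)*(1-y)*Real.log y)) := by funext y; ring
      rw [hnl2]
      exact ((integrableOn_pl k).neg.const_mul _)),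
    MeasureTheory.integral_const_mul, MeasureTheory.integral_const_mul, int_c, ee_int]
  have hxp : (0:ℝ) ≤ x^(k+1) := by positivity
  have h1 : A * (1/(((k:ℝ)+2)*((k:ℝ)+3))) ≤ A * 1 :=
    mul_le_mul_of_nonneg_left (cc_le_one k) hA0
  have h2 : ((k:ℝ)+1)^2 * (1/((k:ℝ)+2)^2 - 1/((k:ℝ)+3)^2) ≤ ((k:ℝ)+1)^2 * 1 :=
    mul_le_mul_of_nonneg_left (ee_le_one k) (by positivity)
  calc x^(k+1) * (A * (1/(((k:ℝ)+2)*((k:ℝ)+3))) + ((k:ℝ)+1)^2 * (1/((k:ℝ)+2)^2 - 1/((k:ℝ)+3)^2))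
      ≤ x^(k+1) * (A * 1 + ((k:ℝ)+1)^2 * 1) := by
        apply mul_le_mul_of_nonneg_left _ hxp
        linarith
    _ = (2*((k:ℝ)+1) + ((k:ℝ)+1)^2*(|Real.log x|+1)) * x^(k+1) := by rw [hA]; ring

lemma summable_boundY {x : ℝ} (hx : x ∈ Set.Ioo (0:ℝ) 1) :
    Summable (fun k : ℕ => (2*((k:ℝ)+1) + ((k:ℝ)+1)^2*(|Real.log x|+1)) * x^(k+1)) := by
  obtain ⟨hx0, hx1⟩ := hx
  have h1 := (hs1 hx0 hx1).summable.mul_left (2*x)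
  have h2 := (hs2 hx0 hx1).summable.mul_left ((|Real.log x|+1)*x)
  refine (h1.add h2).congr fun k => ?_
  show 2*x*(((k:ℝ)+1) * x^k) + (|Real.log x|+1)*x*(((k:ℝ)+1)^2 * x^k)
      = (2*((k:ℝ)+1) + ((k:ℝ)+1)^2*(|Real.log x|+1)) * x^(k+1)
  rw [pow_succ]
  ring

lemma stepY {x : ℝ} (hx : x ∈ Set.Ioo (0:ℝ) 1) :
    HasSum (fun k => GG k x) (∫ y in Set.Ioo (0:ℝ) 1, inner1 x y) := by
  have hint : ∀ k : ℕ, Integrable (fun y => FF k x y) (volume.restrict (Set.Ioo 0 1)) :=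
    fun k => integrableOn_FF k x
  have hsum : Summable (fun k : ℕ => ∫ y in Set.Ioo (0:ℝ) 1, ‖FF k x y‖) := by
    refine Summable.of_nonneg_of_le (fun k => ?_) (fun k => norm_int_FF_le hx k)
      (summable_boundY hx)
    exact MeasureTheory.integral_nonneg fun y => norm_nonneg _
  have H := MeasureTheory.hasSum_integral_of_summable_integral_norm hint hsum
  have e1 : ∫ y in Set.Ioo (0:ℝ) 1, (∑' k, FF k x y) = ∫ y in Set.Ioo (0:ℝ) 1, inner1 x y := by
    apply MeasureTheory.setIntegral_congr_fun measurableSet_Ioo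
    intro y hy
    exact (claimA hx hy).tsum_eq
  rw [e1] at H
  have e2 : (fun k => ∫ y in Set.Ioo (0:ℝ) 1, FF k x y) = fun k => GG k x := by
    funext k; exact int_FF k x
  rwa [e2] at H

noncomputable def VV (k : ℕ) : ℝ := -2*((k:ℝ)+1)*(cc k)^2 - 2*((k:ℝ)+1)^2*(cc k)*(dd k)

lemma GG_expand (k : ℕ) : (fun x : ℝ => GG k x) = fun x : ℝ =>
    (-2*((k:ℝ)+1)*cc k - ((k:ℝ)+1)^2*dd k) * (x^(k+1)*(1-x))
    + (-((k:ℝ)+1)^2*cc k) * (x^(k+1)*(1-x)*Real.log x) := by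
  funext x; simp only [GG]; ring

lemma integrableOn_GG (k : ℕ) : IntegrableOn (fun x => GG k x) (Set.Ioo (0:ℝ) 1) := by
  rw [GG_expand]
  exact ((integrableOn_p k).const_mul _).add ((integrableOn_pl k).const_mul _)

lemma int_GG (k : ℕ) : ∫ x in Set.Ioo (0:ℝ) 1, GG k x = VV k := by
  rw [GG_expand, MeasureTheory.integral_add ((integrableOn_p k).const_mul _)
    ((integrableOn_pl k).const_mul _), MeasureTheory.integral_const_mul,
    MeasureTheory.integral_const_mul, int_c, int_d]
  simp only [VV, cc, dd]
  ring

lemma cc_pos (k : ℕ) : 0 < cc k := by simp only [cc]; positivity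

lemma cc_le (k : ℕ) : cc k ≤ 1/((k:ℝ)+1)^2 := by
  simp only [cc]
  apply one_div_le_one_div_of_le (by positivity)
  nlinarith [Nat.cast_nonneg (α := ℝ) k]

lemma ee_nonneg (k : ℕ) : 0 ≤ -dd k := by
  simp only [dd]
  have : 1/((k:ℝ)+3)^2 ≤ 1/((k:ℝ)+2)^2 := by
    apply one_div_le_one_div_of_le (by positivity)
    nlinarith [Nat.cast_nonneg (α := ℝ) k]
  linarith

lemma ee_le (k : ℕ) : -dd k ≤ 1/((k:ℝ)+1)^2 := by
  simp only [dd]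
  have h1 : 1/((k:ℝ)+2)^2 ≤ 1/((k:ℝ)+1)^2 := by
    apply one_div_le_one_div_of_le (by positivity)
    nlinarith [Nat.cast_nonneg (α := ℝ) k]
  have h2 : 0 ≤ 1/((k:ℝ)+3)^2 := by positivity
  linarith

lemma norm_int_GG_le (k : ℕ) :
    ∫ x in Set.Ioo (0:ℝ) 1, ‖GG k x‖ ≤ 4/((k:ℝ)+1)^2 := by
  set C1 : ℝ := -2*((k:ℝ)+1)*cc k - ((k:ℝ)+1)^2*dd k with hC1
  set C2 : ℝ := ((k:ℝ)+1)^2*cc k with hC2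
  have hC20 : 0 ≤ C2 := by
    have := (cc_pos k).le
    positivity
  have hgint : IntegrableOn (fun x : ℝ =>
      |C1| * (x^(k+1)*(1-x)) + C2 * (x^(k+1)*(1-x)*(-Real.log x))) (Set.Ioo 0 1) := by
    apply MeasureTheory.Integrable.add ((integrableOn_p k).const_mul _)
    have hnl2 : (fun x : ℝ => C2 * (x^(k+1)*(1-x)*(-Real.log x)))
        = fun x : ℝ => C2 * (-(x^(k+1)*(1-x)*Real.log x)) := by funext x; ring
    rw [hnl2]
    exact ((integrableOn_pl k).neg.const_mul _)
  have step1 : ∫ x in Set.Ioo (0:ℝ) 1, ‖GG k x‖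
      ≤ ∫ x in Set.Ioo (0:ℝ) 1,
          (|C1| * (x^(k+1)*(1-x)) + C2 * (x^(k+1)*(1-x)*(-Real.log x))) := by
    apply MeasureTheory.setIntegral_mono_on (integrableOn_GG k).norm hgint measurableSet_Ioo
    intro x hx
    obtain ⟨hx0, hx1⟩ := hx
    have hlx : Real.log x ≤ 0 := Real.log_nonpos hx0.le hx1.le
    have hp0 : (0:ℝ) ≤ x^(k+1)*(1-x) := by
      have : (0:ℝ) ≤ 1 - x := by linarith
      positivity
    have hGG : GG k x = (x^(k+1)*(1-x)) * (C1 - C2 * Real.log x) := by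
      simp only [GG, hC1, hC2]; ring
    rw [Real.norm_eq_abs, hGG, abs_mul, abs_of_nonneg hp0]
    have hw : |C1 - C2 * Real.log x| ≤ |C1| + C2 * (-Real.log x) := by
      refine (abs_sub _ _).trans (le_of_eq ?_)
      rw [abs_mul, abs_of_nonneg hC20, abs_of_nonpos hlx]
    calc (x^(k+1)*(1-x)) * |C1 - C2 * Real.log x|
        ≤ (x^(k+1)*(1-x)) * (|C1| + C2 * (-Real.log x)) :=
          mul_le_mul_of_nonneg_left hw hp0
      _ = |C1| * (x^(k+1)*(1-x)) + C2 * (x^(k+1)*(1-x)*(-Real.log x)) := by ring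
  refine step1.trans ?_
  have hnl2 : (fun x : ℝ => C2 * (x^(k+1)*(1-x)*(-Real.log x)))
      = fun x : ℝ => C2 * (-(x^(k+1)*(1-x)*Real.log x)) := by funext x; ring
  rw [MeasureTheory.integral_add ((integrableOn_p k).const_mul _)
      (by rw [hnl2]; exact ((integrableOn_pl k).neg.const_mul _)),
    MeasureTheory.integral_const_mul, MeasureTheory.integral_const_mul, int_c, ee_int]
  -- now: |C1| * cc-value + C2 * ee-value ≤ 4/(k+1)^2
  have hcc : (1:ℝ)/(((k:ℝ)+2)*((k:ℝ)+3)) = cc k := rfl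
  have hee : (1:ℝ)/((k:ℝ)+2)^2 - 1/((k:ℝ)+3)^2 = -dd k := by simp only [dd]; ring
  rw [hcc, hee]
  set u : ℝ := 1/((k:ℝ)+1)^2 with hu
  have hu0 : 0 < u := by positivity
  have h1 : |C1| ≤ 2*((k:ℝ)+1)*cc k + ((k:ℝ)+1)^2*(-dd k) := by
    rw [hC1]
    refine (abs_sub _ _).trans ?_
    rw [abs_mul, abs_mul, abs_neg, abs_mul]
    rw [abs_of_nonneg (by norm_num : (0:ℝ) ≤ 2), abs_of_nonneg (by positivity : (0:ℝ) ≤ ((k:ℝ)+1)),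
      abs_of_nonneg (cc_pos k).le, abs_of_nonneg (by positivity : (0:ℝ) ≤ ((k:ℝ)+1)^2)]
    have : |dd k| = -dd k := abs_of_nonpos (by linarith [ee_nonneg k])
    rw [this]
  have hk1 : (0:ℝ) < (k:ℝ)+1 := by positivity
  have hb1 : 2*((k:ℝ)+1)*cc k + ((k:ℝ)+1)^2*(-dd k) ≤ 2*((k:ℝ)+1)*u + ((k:ℝ)+1)^2*u := by
    have := cc_le k
    have := ee_le k
    have := ee_nonneg k
    have := (cc_pos k).le
    nlinarith
  have hccu : cc k ≤ u := cc_le k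
  have heeu : -dd k ≤ u := ee_le k
  calc |C1| * cc k + C2 * (-dd k)
      ≤ (2*((k:ℝ)+1)*u + ((k:ℝ)+1)^2*u) * u + (((k:ℝ)+1)^2*u) * u := by
        have t1 : |C1| * cc k ≤ (2*((k:ℝ)+1)*u + ((k:ℝ)+1)^2*u) * u := by
          apply mul_le_mul (h1.trans hb1) hccu (cc_pos k).le
          positivity
        have t2 : C2 * (-dd k) ≤ (((k:ℝ)+1)^2*u) * u := by
          rw [hC2]
          apply mul_le_mul _ heeu (ee_nonneg k) (by positivity)
          exact mul_le_mul_of_nonneg_left hccu (by positivity)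
        linarith
    _ = 2/((k:ℝ)+1)^3 + 2/((k:ℝ)+1)^2 := by
        rw [hu]
        field_simp
        ring
    _ ≤ 4/((k:ℝ)+1)^2 := by
        have h3 : 2/((k:ℝ)+1)^3 ≤ 2/((k:ℝ)+1)^2 := by
          apply div_le_div_of_nonneg_left (by norm_num) (by positivity)
          nlinarith [Nat.cast_nonneg (α := ℝ) k]
        have h4 : 4/((k:ℝ)+1)^2 = 2/((k:ℝ)+1)^2 + 2/((k:ℝ)+1)^2 := by ring
        linarith

lemma summable_shift (p : ℕ) (hp : 1 < p) :
    Summable (fun n : ℕ => 1/((n:ℝ)+1)^p) := by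
  have h := Real.summable_one_div_nat_pow.mpr hp
  have h2 := (summable_nat_add_iff 1).mpr h
  refine h2.congr fun n => ?_
  push_cast
  ring

lemma stepX : HasSum VV (∫ x in Set.Ioo (0:ℝ) 1, ∑' k, GG k x) := by
  have hint : ∀ k : ℕ, Integrable (fun x => GG k x) (volume.restrict (Set.Ioo 0 1)) :=
    fun k => integrableOn_GG k
  have hsum : Summable (fun k : ℕ => ∫ x in Set.Ioo (0:ℝ) 1, ‖GG k x‖) := by
    refine Summable.of_nonneg_of_le (fun k => ?_) (fun k => norm_int_GG_le k) ?_
    · exact MeasureTheory.integral_nonneg fun x => norm_nonneg _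
    · have := (summable_shift 2 one_lt_two).mul_left 4
      refine this.congr fun k => ?_
      rw [mul_one_div]
  have H := MeasureTheory.hasSum_integral_of_summable_integral_norm hint hsum
  have e2 : (fun k => ∫ x in Set.Ioo (0:ℝ) 1, GG k x) = VV := by
    funext k; exact int_GG k
  rwa [e2] at H

lemma VV_eq (k : ℕ) : VV k = (2*(1/((k:ℝ)+2)^3) + 8*(1/((k:ℝ)+3)^3))
    + (4*(1/((k:ℝ)+3)^2) - 4*(1/((k:ℝ)+2)^2)) := by
  have h2 : ((k:ℝ)+2) ≠ 0 := by positivity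
  have h3 : ((k:ℝ)+3) ≠ 0 := by positivity
  simp only [VV, cc, dd]
  field_simp
  ring

lemma shift1 (p : ℕ) (hp : 1 < p) :
    HasSum (fun k : ℕ => 1/((k:ℝ)+2)^p) ((∑' n : ℕ, 1/((n:ℝ)+1)^p) - 1) := by
  have hZ := (summable_shift p hp).hasSum
  have key : HasSum (fun n : ℕ => 1/((((n+1):ℕ):ℝ)+1)^p)
      ((∑' n : ℕ, 1/((n:ℝ)+1)^p) - 1) := by
    rw [hasSum_nat_add_iff (f := fun n : ℕ => 1/((n:ℝ)+1)^p) 1]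
    refine (congrArg (HasSum _) ?_).mpr hZ
    simp [Finset.sum_range_one]
  have hfun : (fun n : ℕ => 1/((((n+1):ℕ):ℝ)+1)^p) = fun k : ℕ => 1/((k:ℝ)+2)^p := by
    funext n
    push_cast
    ring_nf
  rwa [hfun] at key

lemma shift2 (p : ℕ) (hp : 1 < p) :
    HasSum (fun k : ℕ => 1/((k:ℝ)+3)^p)
      ((∑' n : ℕ, 1/((n:ℝ)+1)^p) - 1 - 1/2^p) := by
  have h1 := shift1 p hp
  have key : HasSum (fun n : ℕ => 1/((((n+1):ℕ):ℝ)+2)^p)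
      ((∑' n : ℕ, 1/((n:ℝ)+1)^p) - 1 - 1/2^p) := by
    rw [hasSum_nat_add_iff (f := fun n : ℕ => 1/((n:ℝ)+2)^p) 1]
    refine (congrArg (HasSum _) ?_).mpr h1
    simp [Finset.sum_range_one]
  have hfun : (fun n : ℕ => 1/((((n+1):ℕ):ℝ)+2)^p) = fun k : ℕ => 1/((k:ℝ)+3)^p := by
    funext n
    push_cast
    ring_nf
  rwa [hfun] at key

lemma tsum_VV : HasSum VV (10 * (∑' n : ℕ, 1/((n:ℝ)+1)^3) - 12) := by
  have h3a := shift1 3 (by norm_num)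
  have h3b := shift2 3 (by norm_num)
  have h2a := shift1 2 one_lt_two
  have h2b := shift2 2 one_lt_two
  have H := ((h3a.mul_left 2).add (h3b.mul_left 8)).add
    ((h2b.mul_left 4).sub (h2a.mul_left 4))
  have hf : (fun k : ℕ => (2*(1/((k:ℝ)+2)^3) + 8*(1/((k:ℝ)+3)^3))
      + (4*(1/((k:ℝ)+3)^2) - 4*(1/((k:ℝ)+2)^2))) = VV := by
    funext k
    rw [VV_eq k]
  rw [hf] at H
  refine (congrArg (HasSum _) ?_).mpr H
  ring

lemma int_orig_z {x y : ℝ} (hx : x ∈ Set.Ioo (0:ℝ) 1) (hy : y ∈ Set.Ioo (0:ℝ) 1) :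
    ∫ z in Set.Ioo (0:ℝ) 1, x * (1 - x) * y * (1 - y) * z * (1 - z) / (1 - (1 - x * y) * z) ^ 2
      = inner1 x y := by
  obtain ⟨hx0, hx1⟩ := hx
  obtain ⟨hy0, hy1⟩ := hy
  have hxy0 : 0 < x*y := mul_pos hx0 hy0
  have hxy1 : x*y < 1 := by nlinarith
  have ht0 : 0 < 1 - x*y := by linarith
  have ht1 : 1 - x*y < 1 := by linarith
  have hsplit : (fun z : ℝ => x * (1 - x) * y * (1 - y) * z * (1 - z) / (1 - (1 - x * y) * z) ^ 2)
      = fun z : ℝ => (x * (1 - x) * y * (1 - y)) * (z * (1-z) / (1 - (1 - x * y) * z) ^ 2) := by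
    funext z
    ring
  rw [hsplit, MeasureTheory.integral_const_mul, int_z ht0 ht1]
  have hl : 1 - (1 - x*y) = x*y := by ring
  rw [hl]
  simp only [inner1]
  ring

/-- The Beukers triple integral `I₁` equals `5ζ(3) - 6`. -/
theorem beukers_integral_one :
    (1 / 2 : ℝ) * ∫ x in Set.Ioo (0:ℝ) 1, ∫ y in Set.Ioo (0:ℝ) 1,
        ∫ z in Set.Ioo (0:ℝ) 1,
          x * (1 - x) * y * (1 - y) * z * (1 - z) / (1 - (1 - x * y) * z) ^ 2
      = 5 * (∑' n : ℕ, 1 / ((n : ℝ) + 1) ^ 3) - 6 := by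
  have hout : ∫ x in Set.Ioo (0:ℝ) 1, (∫ y in Set.Ioo (0:ℝ) 1, ∫ z in Set.Ioo (0:ℝ) 1,
      x * (1 - x) * y * (1 - y) * z * (1 - z) / (1 - (1 - x * y) * z) ^ 2)
      = ∫ x in Set.Ioo (0:ℝ) 1, ∑' k, GG k x := by
    apply MeasureTheory.setIntegral_congr_fun measurableSet_Ioo
    intro x hx
    beta_reduce
    have hy : ∫ y in Set.Ioo (0:ℝ) 1, (∫ z in Set.Ioo (0:ℝ) 1,
        x * (1 - x) * y * (1 - y) * z * (1 - z) / (1 - (1 - x * y) * z) ^ 2)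
        = ∫ y in Set.Ioo (0:ℝ) 1, inner1 x y := by
      apply MeasureTheory.setIntegral_congr_fun measurableSet_Ioo
      intro y hy
      exact int_orig_z hx hy
    rw [hy, ← (stepY hx).tsum_eq]
  rw [hout, ← stepX.tsum_eq, tsum_VV.tsum_eq]
  ring
end

section
/- For 0 < z < 1, the integral ∫_0^1∫_0^1 dx dy / √(x(1-x) y (1-zxy)) equals 2π · ₃F₂(1/2, 1/2, 1/2; 1, 3/2; z). -/
open MeasureTheory Real

/-- Pochhammer symbol `(a)_k` for a real `a`. -/
noncomputable def poch (a : ℝ) (k : ℕ) : ℝ := (ascPochhammer ℝ k).eval a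

/-- The generalized hypergeometric series `₃F₂(a,b,c;d,e;z)`. -/
noncomputable def F32 (a b c d e z : ℝ) : ℝ :=
  ∑' k : ℕ, poch a k * poch b k * poch c k / (poch d k * poch e k * (k.factorial : ℝ)) * z ^ k

open Finset

lemma poch_succ (a : ℝ) (k : ℕ) : poch a (k+1) = poch a k * (a + k) :=
  ascPochhammer_succ_eval k a

lemma poch_zero (a : ℝ) : poch a 0 = 1 := by simp [poch]

lemma poch_pos {a : ℝ} (ha : 0 < a) (k : ℕ) : 0 < poch a k :=
  ascPochhammer_pos k a ha

lemma poch_one (k : ℕ) : poch 1 k = k.factorial := by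
  simpa [poch] using ascPochhammer_eval_one ℝ k

/-- coefficient of binomial series for (1-t)^(-1/2) -/
noncomputable def bc (k : ℕ) : ℝ := poch (1/2) k / k.factorial

lemma bc_zero : bc 0 = 1 := by simp [bc, poch_zero]

lemma bc_pos (k : ℕ) : 0 < bc k :=
  div_pos (poch_pos (by norm_num) k) (by positivity)

lemma bc_succ (k : ℕ) : bc (k+1) = bc k * ((k + 1/2)/(k+1)) := by
  rw [bc, bc, poch_succ, Nat.factorial_succ]
  have h1 : (k.factorial : ℝ) ≠ 0 := by positivity
  push_cast
  field_simp
  ring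

lemma bc_le_one (k : ℕ) : bc k ≤ 1 := by
  induction k with
  | zero => simp [bc_zero]
  | succ k ih =>
    rw [bc_succ]
    have h1 : ((k:ℝ) + 1/2)/((k:ℝ)+1) ≤ 1 := by
      rw [div_le_one (by positivity)]; linarith
    calc bc k * ((k + 1/2)/(k+1)) ≤ 1 * 1 :=
      mul_le_mul ih h1 (by positivity) (by norm_num)
    _ = 1 := by norm_num

-- glue: descPochhammer ℤ smeval on ℝ in terms of poch
lemma desc_smeval_neg (r : ℝ) (k : ℕ) :
    (descPochhammer ℤ k).smeval (-r) = (-1)^k * poch r k := by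
  have h := Polynomial.ascPochhammer_smeval_neg_eq_descPochhammer (-r : ℝ) k
  rw [neg_neg] at h
  have h2 : (ascPochhammer ℕ k).smeval r = poch r k := Polynomial.ascPochhammer_smeval_eq_eval r k
  rw [h2] at h
  have : ((-1:ℝ))^k * ((-1:ℝ))^k = 1 := by
    rw [← mul_pow]; norm_num
  calc (descPochhammer ℤ k).smeval (-r) = ((-1:ℝ))^k * ((-1:ℝ))^k * (descPochhammer ℤ k).smeval (-r) := by
        rw [this, one_mul]
    _ = ((-1:ℝ))^k * poch r k := by rw [mul_assoc, h, Units.smul_def, zsmul_eq_mul, Int.cast_negOnePow_natCast]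

lemma conv_poch (k : ℕ) :
    ∑ ij ∈ antidiagonal k, (k.choose ij.1 : ℝ) * (poch (1/2) ij.1 * poch (1/2) ij.2)
      = k.factorial := by
  have h := Ring.descPochhammer_smeval_add (R := ℝ) (r := (-1/2:ℝ)) (s := (-1/2:ℝ)) k
    (Commute.all _ _)
  have hsum : (-1/2:ℝ) + (-1/2:ℝ) = -(1:ℝ) := by norm_num
  rw [hsum] at h
  rw [desc_smeval_neg 1 k] at h
  have hterm : ∀ ij ∈ antidiagonal k,
      (k.choose ij.1 : ℝ) * ((descPochhammer ℤ ij.1).smeval (-1/2:ℝ) *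
        (descPochhammer ℤ ij.2).smeval (-1/2:ℝ))
      = (-1:ℝ)^k * ((k.choose ij.1 : ℝ) * (poch (1/2) ij.1 * poch (1/2) ij.2)) := by
    intro ij hij
    have h1 : (-1/2:ℝ) = -(1/2:ℝ) := by norm_num
    rw [h1, desc_smeval_neg (1/2) ij.1, desc_smeval_neg (1/2) ij.2]
    have hk : ij.1 + ij.2 = k := Finset.HasAntidiagonal.mem_antidiagonal.mp hij
    rw [← hk, pow_add]
    ring
  rw [Finset.sum_congr rfl hterm, ← Finset.mul_sum] at h
  have hp1 : poch 1 k = k.factorial := by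
    simpa [poch] using ascPochhammer_eval_one ℝ k
  rw [hp1] at h
  have hne : ((-1:ℝ))^k ≠ 0 := by
    apply pow_ne_zero; norm_num
  exact (mul_left_cancel₀ hne h).symm

lemma conv_bc (k : ℕ) : ∑ ij ∈ antidiagonal k, bc ij.1 * bc ij.2 = 1 := by
  have hkf : (k.factorial : ℝ) ≠ 0 := by positivity
  have hterm : ∀ ij ∈ antidiagonal k, bc ij.1 * bc ij.2
      = (k.choose ij.1 : ℝ) * (poch (1/2) ij.1 * poch (1/2) ij.2) / k.factorial := by
    intro ij hij
    have hk : ij.1 + ij.2 = k := Finset.HasAntidiagonal.mem_antidiagonal.mp hij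
    have hle : ij.1 ≤ k := by omega
    have hch : (k.choose ij.1) * ij.1.factorial * (k - ij.1).factorial = k.factorial :=
      Nat.choose_mul_factorial_mul_factorial hle
    have hj : k - ij.1 = ij.2 := by omega
    rw [hj] at hch
    have hch' : (k.choose ij.1 : ℝ) * ij.1.factorial * ij.2.factorial = k.factorial := by
      exact_mod_cast congrArg (Nat.cast : ℕ → ℝ) hch
    rw [bc, bc, ← hch']
    have h1 : (ij.1.factorial : ℝ) ≠ 0 := by positivity
    have h2 : (ij.2.factorial : ℝ) ≠ 0 := by positivity
    have h3 : (k.choose ij.1 : ℝ) ≠ 0 := by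
      have := Nat.choose_pos hle; positivity
    field_simp
  rw [Finset.sum_congr rfl hterm, ← Finset.sum_div, conv_poch, div_self hkf]

lemma summable_bc (t : ℝ) (h0 : 0 ≤ t) (h1 : t < 1) :
    Summable (fun k => bc k * t ^ k) := by
  apply Summable.of_nonneg_of_le (fun k => mul_nonneg (bc_pos k).le (by positivity))
    (fun k => ?_) (summable_geometric_of_lt_one h0 h1)
  calc bc k * t ^ k ≤ 1 * t ^ k := by
        apply mul_le_mul_of_nonneg_right (bc_le_one k) (by positivity)
    _ = t ^ k := one_mul _

lemma hasSum_invSqrt (t : ℝ) (h0 : 0 ≤ t) (h1 : t < 1) :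
    HasSum (fun k => bc k * t ^ k) (1 / Real.sqrt (1 - t)) := by
  have hs := summable_bc t h0 h1
  set S := ∑' k, bc k * t ^ k with hS
  have hnorm : Summable (fun k => ‖bc k * t ^ k‖) := by
    apply hs.congr; intro k
    rw [Real.norm_of_nonneg (mul_nonneg (bc_pos k).le (by positivity))]
  have hsq : S * S = 1 / (1 - t) := by
    rw [hS, tsum_mul_tsum_eq_tsum_sum_antidiagonal_of_summable_norm hnorm hnorm]
    have : ∀ n : ℕ, ∑ ij ∈ antidiagonal n, (bc ij.1 * t ^ ij.1) * (bc ij.2 * t ^ ij.2)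
        = t ^ n := by
      intro n
      have : ∀ ij ∈ antidiagonal n, (bc ij.1 * t ^ ij.1) * (bc ij.2 * t ^ ij.2)
          = (bc ij.1 * bc ij.2) * t ^ n := by
        intro ij hij
        have hk : ij.1 + ij.2 = n := Finset.HasAntidiagonal.mem_antidiagonal.mp hij
        rw [← hk, pow_add]; ring
      rw [Finset.sum_congr rfl this, ← Finset.sum_mul, conv_bc, one_mul]
    rw [tsum_congr this, tsum_geometric_of_lt_one h0 h1, one_div]
  have hSpos : 0 < S := by
    have h00 : bc 0 * t ^ 0 ≤ S := Summable.le_tsum hs 0 (fun j _ => mul_nonneg (bc_pos j).le (by positivity))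
    simp [bc_zero] at h00
    linarith
  have h1t : 0 < 1 - t := by linarith
  have : S = 1 / Real.sqrt (1 - t) := by
    have hsqrt : Real.sqrt (1 - t) = 1 / S := by
      rw [eq_div_iff (ne_of_gt hSpos)]
      have : (1 - t) = (1/S)^2 := by
        rw [div_pow, one_pow, eq_div_iff (by positivity), sq]
        rw [hsq]; field_simp
      rw [this, Real.sqrt_sq (by positivity)]
      field_simp
    rw [hsqrt]; field_simp
  rw [← this]
  exact hs.hasSum

lemma Gamma_nat_add_half (k : ℕ) :
    Real.Gamma ((k:ℝ) + 1/2) = poch (1/2) k * Real.sqrt π := by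
  induction k with
  | zero =>
    rw [show ((0:ℕ):ℝ) + 1/2 = 1/2 by norm_num, Real.Gamma_one_half_eq, poch_zero, one_mul]
  | succ k ih =>
    have h : ((k:ℝ) + 1) + 1/2 = ((k:ℝ) + 1/2) + 1 := by ring
    push_cast
    rw [h, Real.Gamma_add_one (by positivity), ih, poch_succ]
    ring

/-- the complex integrand of betaIntegral equals ofReal of the real one -/
lemma beta_integrand_eq (k : ℕ) (x : ℝ) (hx : 0 ≤ x) (hx1 : x ≤ 1) :
    (x:ℂ) ^ (((k:ℝ) + 1/2 : ℂ) - 1) * ((1:ℂ) - x) ^ ((1/2 : ℂ) - 1)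
      = ((x ^ ((k:ℝ) - 1/2) * (1-x) ^ (-(1/2):ℝ) : ℝ) : ℂ) := by
  have h1 : (((k:ℝ) + 1/2 : ℂ) - 1) = (((k:ℝ) - 1/2 : ℝ) : ℂ) := by push_cast; ring
  have h2 : ((1/2 : ℂ) - 1) = ((-(1/2) : ℝ) : ℂ) := by norm_num
  have h3 : ((1:ℂ) - x) = (((1 - x : ℝ)) : ℂ) := by push_cast; ring
  rw [h1, h2, h3, ← Complex.ofReal_cpow hx, ← Complex.ofReal_cpow (by linarith),
    ← Complex.ofReal_mul]

lemma x_integral (k : ℕ) :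
    ∫ x in Set.Ioo (0:ℝ) 1, x ^ ((k:ℝ) - 1/2) * (1-x) ^ (-(1/2):ℝ) = π * bc k := by
  have hu : (0:ℝ) < ((k:ℝ) + 1/2 : ℂ).re := by
    simp; positivity
  have hv : (0:ℝ) < ((1/2 : ℂ)).re := by norm_num
  have hbeta := Complex.Gamma_mul_Gamma_eq_betaIntegral hu hv
  -- identify the beta integral with ofReal of real integral
  have hint : Complex.betaIntegral ((k:ℝ) + 1/2) (1/2)
      = ((∫ x in Set.Ioo (0:ℝ) 1, x ^ ((k:ℝ) - 1/2) * (1-x) ^ (-(1/2):ℝ) : ℝ) : ℂ) := by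
    rw [Complex.betaIntegral]
    rw [intervalIntegral.integral_of_le (by norm_num : (0:ℝ) ≤ 1),
      MeasureTheory.integral_Ioc_eq_integral_Ioo]
    rw [show (∫ t in Set.Ioo (0:ℝ) 1, (t:ℂ) ^ (((k:ℝ) + 1/2 : ℂ) - 1) * ((1:ℂ) - t) ^ ((1/2:ℂ) - 1))
        = ∫ t in Set.Ioo (0:ℝ) 1, ((t ^ ((k:ℝ) - 1/2) * (1-t) ^ (-(1/2):ℝ) : ℝ) : ℂ) from
      setIntegral_congr_fun measurableSet_Ioo (fun t ht => beta_integrand_eq k t ht.1.le ht.2.le)]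
    exact integral_ofReal
  -- now compute the Gamma side
  have hG : Complex.Gamma ((k:ℝ) + 1/2 : ℂ) * Complex.Gamma (1/2 : ℂ)
      = Complex.Gamma (((k:ℝ) + 1/2 : ℂ) + 1/2) * ((π * bc k : ℝ) : ℂ) := by
    have e1 : ((k:ℝ) + 1/2 : ℂ) = (((k:ℝ) + 1/2 : ℝ) : ℂ) := by push_cast; ring
    have e2 : ((1/2 : ℂ)) = (((1/2 : ℝ)) : ℂ) := by norm_num
    rw [e1, e2, ← Complex.ofReal_add, Complex.Gamma_ofReal, Complex.Gamma_ofReal,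
      Complex.Gamma_ofReal, ← Complex.ofReal_mul, ← Complex.ofReal_mul]
    congr 1
    have hkf : (k.factorial : ℝ) ≠ 0 := by positivity
    rw [_root_.Gamma_nat_add_half, Real.Gamma_one_half_eq,
      show ((k:ℝ) + 1/2 + 1/2) = (k:ℝ) + 1 by ring, Real.Gamma_nat_eq_factorial]
    rw [bc]
    rw [mul_assoc, Real.mul_self_sqrt Real.pi_pos.le]
    field_simp
  rw [hG, hint] at hbeta
  have hGne : Complex.Gamma (((k:ℝ) + 1/2 : ℂ) + 1/2) ≠ 0 := by
    apply Complex.Gamma_ne_zero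
    intro m
    intro hcontra
    have : (((k:ℝ) + 1 : ℝ) : ℂ) = -(m:ℂ) := by push_cast at hcontra ⊢; linear_combination hcontra
    have h2 : ((k:ℝ) + 1 : ℝ) = -(m:ℝ) := by exact_mod_cast this
    have : (0:ℝ) < (k:ℝ) + 1 := by positivity
    have : (0:ℝ) ≤ (m:ℝ) := Nat.cast_nonneg m
    linarith
  have := mul_left_cancel₀ hGne hbeta
  exact_mod_cast this.symm

lemma x_integrable (k : ℕ) :
    IntegrableOn (fun x => x ^ ((k:ℝ) - 1/2) * (1-x) ^ (-(1/2):ℝ)) (Set.Ioo (0:ℝ) 1) := by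
  have hu : (0:ℝ) < ((k:ℝ) + 1/2 : ℂ).re := by simp; positivity
  have hv : (0:ℝ) < ((1/2 : ℂ)).re := by norm_num
  have h := (Complex.betaIntegral_convergent hu hv).1
  rw [integrableOn_Ioc_iff_integrableOn_Ioo] at h
  have h2 := h.re
  apply MeasureTheory.IntegrableOn.congr_fun h2 ?_ measurableSet_Ioo
  intro x hx
  show RCLike.re _ = _
  rw [beta_integrand_eq k x hx.1.le hx.2.le]
  exact Complex.ofReal_re _

lemma y_integrable (k : ℕ) :
    IntegrableOn (fun y : ℝ => y ^ ((k:ℝ) - 1/2)) (Set.Ioo (0:ℝ) 1) := by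
  have h := (intervalIntegral.intervalIntegrable_rpow' (a := 0) (b := 1)
    (r := (k:ℝ) - 1/2) (by have := Nat.cast_nonneg (α := ℝ) k; linarith)).1
  rwa [integrableOn_Ioc_iff_integrableOn_Ioo] at h

lemma y_integral (k : ℕ) :
    ∫ y in Set.Ioo (0:ℝ) 1, y ^ ((k:ℝ) - 1/2) = ((k:ℝ) + 1/2)⁻¹ := by
  rw [← MeasureTheory.integral_Ioc_eq_integral_Ioo,
    ← intervalIntegral.integral_of_le (by norm_num : (0:ℝ) ≤ 1)]
  rw [integral_rpow (Or.inl (by have := Nat.cast_nonneg (α := ℝ) k; linarith))]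
  rw [show (k:ℝ) - 1/2 + 1 = (k:ℝ) + 1/2 by ring]
  rw [Real.one_rpow, Real.zero_rpow (by positivity)]
  norm_num

lemma poch_threehalf (k : ℕ) : poch (3/2) k = (2*k+1) * poch (1/2) k := by
  induction k with
  | zero => simp [poch_zero]
  | succ k ih =>
    rw [poch_succ, ih, poch_succ]
    push_cast
    ring

lemma khalf_inv_le_two (k : ℕ) : ((k:ℝ) + 1/2)⁻¹ ≤ 2 := by
  rw [inv_le_comm₀ (by positivity) (by norm_num)]
  have := Nat.cast_nonneg (α := ℝ) k
  linarith

/-- inner series computation: for fixed `w ∈ (0,1)`,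
`∫ y in (0,1), y^(-1/2) (1-w y)^(-1/2) dy`-type swap -/
lemma inner_swap {w : ℝ} (hw0 : 0 < w) (hw1 : w < 1) :
    ∫ y in Set.Ioo (0:ℝ) 1, (∑' k : ℕ, bc k * w ^ k * y ^ ((k:ℝ) - 1/2))
      = ∑' k : ℕ, bc k * w ^ k * ((k:ℝ) + 1/2)⁻¹ := by
  rw [← MeasureTheory.integral_tsum_of_summable_integral_norm]
  · exact tsum_congr fun k => by
      rw [integral_const_mul, y_integral k]
  · intro k
    exact (y_integrable k).const_mul _
  · apply Summable.of_nonneg_of_le (fun k => integral_nonneg fun y => norm_nonneg _)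
      (fun k => ?_) ((summable_geometric_of_lt_one hw0.le hw1).mul_left 2)
    have h1 : ∫ y in Set.Ioo (0:ℝ) 1, ‖bc k * w ^ k * y ^ ((k:ℝ) - 1/2)‖
        = ∫ y in Set.Ioo (0:ℝ) 1, |bc k * w ^ k| * y ^ ((k:ℝ) - 1/2) := by
      apply setIntegral_congr_fun measurableSet_Ioo
      intro y hy
      simp only []; rw [norm_mul, Real.norm_of_nonneg (Real.rpow_nonneg hy.1.le _)]
      rfl
    rw [h1, integral_const_mul, y_integral k,
      abs_of_nonneg (mul_nonneg (bc_pos k).le (by positivity))]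
    calc bc k * w ^ k * ((k:ℝ) + 1/2)⁻¹ ≤ 1 * w ^ k * 2 := by
          apply mul_le_mul (mul_le_mul_of_nonneg_right (bc_le_one k) (by positivity))
            (khalf_inv_le_two k) (by positivity) (by positivity)
      _ = 2 * w ^ k := by ring

/-- pointwise expansion of the inner integrand -/
lemma inner_pointwise {z x y : ℝ} (hz0 : 0 < z) (hz1 : z < 1)
    (hx : x ∈ Set.Ioo (0:ℝ) 1) (hy : y ∈ Set.Ioo (0:ℝ) 1) :
    1 / Real.sqrt (x * (1 - x) * y * (1 - z * x * y))
      = (1 / Real.sqrt (x * (1 - x))) * ∑' k : ℕ, bc k * (z*x) ^ k * y ^ ((k:ℝ) - 1/2) := by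
  obtain ⟨hx0, hx1⟩ := hx
  obtain ⟨hy0, hy1⟩ := hy
  have hw0 : 0 < z * x := by positivity
  have hw1 : z * x < 1 := by nlinarith
  have ht0 : 0 ≤ z * x * y := by positivity
  have ht1 : z * x * y < 1 := by nlinarith
  have hsum := (hasSum_invSqrt (z*x*y) ht0 ht1).tsum_eq
  have hx1' : 0 < x * (1 - x) := by nlinarith
  have hfac : Real.sqrt (x * (1 - x) * y * (1 - z * x * y))
      = Real.sqrt (x * (1-x)) * (Real.sqrt y * Real.sqrt (1 - z*x*y)) := by
    rw [← Real.sqrt_mul (by positivity), ← Real.sqrt_mul (by nlinarith)]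
    ring_nf
  rw [hfac]
  have h2 : (1:ℝ) / (Real.sqrt (x*(1-x)) * (Real.sqrt y * Real.sqrt (1 - z*x*y)))
      = (1 / Real.sqrt (x*(1-x))) * ((1/Real.sqrt y) * (1 / Real.sqrt (1 - z*x*y))) := by
    field_simp
  rw [h2, ← hsum]
  congr 1
  rw [← tsum_mul_left]
  apply tsum_congr
  intro k
  have hyk : (z*x*y)^k = (z*x)^k * y^k := by rw [mul_pow]
  rw [hyk]
  have hsq : (1:ℝ)/Real.sqrt y = y ^ (-(1/2) : ℝ) := by
    rw [Real.sqrt_eq_rpow, one_div, ← Real.rpow_neg hy0.le]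
  have hyy : y ^ ((k:ℝ) - 1/2) = y ^ (k:ℕ) * y ^ (-(1/2):ℝ) := by
    rw [← Real.rpow_natCast y k, ← Real.rpow_add hy0, sub_eq_add_neg]
  rw [hyy, hsq]
  ring

/-- the inner integral -/
lemma inner_integral {z x : ℝ} (hz0 : 0 < z) (hz1 : z < 1) (hx : x ∈ Set.Ioo (0:ℝ) 1) :
    ∫ y in Set.Ioo (0:ℝ) 1, 1 / Real.sqrt (x * (1 - x) * y * (1 - z * x * y))
      = (1 / Real.sqrt (x * (1 - x))) * ∑' k : ℕ, bc k * (z*x) ^ k * ((k:ℝ) + 1/2)⁻¹ := by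
  have hw0 : 0 < z * x := by have := hx.1; positivity
  have hw1 : z * x < 1 := by nlinarith [hx.1, hx.2, hz0, hz1]
  rw [setIntegral_congr_fun measurableSet_Ioo
    (fun y hy => inner_pointwise hz0 hz1 hx hy)]
  rw [integral_const_mul, inner_swap hw0 hw1]

lemma outer_pointwise {z x : ℝ} (hz0 : 0 < z) (hx : x ∈ Set.Ioo (0:ℝ) 1) :
    (1 / Real.sqrt (x * (1 - x))) * ∑' k : ℕ, bc k * (z*x) ^ k * ((k:ℝ) + 1/2)⁻¹
      = ∑' k : ℕ, (bc k * z ^ k * ((k:ℝ) + 1/2)⁻¹) *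
          (x ^ ((k:ℝ) - 1/2) * (1-x) ^ (-(1/2):ℝ)) := by
  obtain ⟨hx0, hx1⟩ := hx
  rw [← tsum_mul_left]
  apply tsum_congr
  intro k
  have hfac : Real.sqrt (x * (1-x)) = Real.sqrt x * Real.sqrt (1-x) :=
    Real.sqrt_mul hx0.le _
  have h1 : (1:ℝ)/Real.sqrt x = x ^ (-(1/2) : ℝ) := by
    rw [Real.sqrt_eq_rpow, one_div, ← Real.rpow_neg hx0.le]
  have h2 : (1:ℝ)/Real.sqrt (1-x) = (1-x) ^ (-(1/2) : ℝ) := by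
    rw [Real.sqrt_eq_rpow, one_div, ← Real.rpow_neg (by linarith)]
  have h3 : (1:ℝ) / Real.sqrt (x * (1-x)) = (1/Real.sqrt x) * (1/Real.sqrt (1-x)) := by
    rw [hfac]; field_simp
  have h4 : x ^ ((k:ℝ) - 1/2) = x ^ (k:ℕ) * x ^ (-(1/2):ℝ) := by
    rw [← Real.rpow_natCast x k, ← Real.rpow_add hx0, sub_eq_add_neg]
  rw [h3, h1, h2, h4, mul_pow]
  ring

lemma outer_swap {z : ℝ} (hz0 : 0 < z) (hz1 : z < 1) :
    ∫ x in Set.Ioo (0:ℝ) 1, (∑' k : ℕ, (bc k * z ^ k * ((k:ℝ) + 1/2)⁻¹) *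
          (x ^ ((k:ℝ) - 1/2) * (1-x) ^ (-(1/2):ℝ)))
      = ∑' k : ℕ, (bc k * z ^ k * ((k:ℝ) + 1/2)⁻¹) * (π * bc k) := by
  rw [← MeasureTheory.integral_tsum_of_summable_integral_norm]
  · exact tsum_congr fun k => by rw [integral_const_mul, x_integral k]
  · intro k
    exact (x_integrable k).const_mul _
  · apply Summable.of_nonneg_of_le (fun k => integral_nonneg fun y => norm_nonneg _)
      (fun k => ?_) ((summable_geometric_of_lt_one hz0.le hz1).mul_left (2*π))
    have h1 : ∫ x in Set.Ioo (0:ℝ) 1, ‖(bc k * z ^ k * ((k:ℝ) + 1/2)⁻¹) *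
          (x ^ ((k:ℝ) - 1/2) * (1-x) ^ (-(1/2):ℝ))‖
        = ∫ x in Set.Ioo (0:ℝ) 1, |bc k * z ^ k * ((k:ℝ) + 1/2)⁻¹| *
          (x ^ ((k:ℝ) - 1/2) * (1-x) ^ (-(1/2):ℝ)) := by
      apply setIntegral_congr_fun measurableSet_Ioo
      intro x hx
      simp only []
      rw [norm_mul, Real.norm_of_nonneg
        (mul_nonneg (Real.rpow_nonneg hx.1.le _) (Real.rpow_nonneg (by linarith [hx.2]) _))]
      rfl
    rw [h1, integral_const_mul, x_integral k,
      abs_of_nonneg (mul_nonneg (mul_nonneg (bc_pos k).le (by positivity)) (by positivity))]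
    have hb := bc_le_one k
    have hbp := (bc_pos k).le
    calc bc k * z ^ k * ((k:ℝ) + 1/2)⁻¹ * (π * bc k)
        ≤ 1 * z ^ k * 2 * (π * 1) := by
          apply mul_le_mul _ _ (by positivity) (by positivity)
          · apply mul_le_mul (mul_le_mul_of_nonneg_right hb (by positivity))
              (khalf_inv_le_two k) (by positivity) (by positivity)
          · apply mul_le_mul_of_nonneg_left hb Real.pi_pos.le
      _ = 2 * π * z ^ k := by ring

/-- the double integral `λ(z)` equals `2π ₃F₂(1/2,1/2,1/2;1,3/2;z)`. -/
theorem lambda_eq_hypergeometric (z : ℝ) (hz : z ∈ Set.Ioo (0:ℝ) 1) :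
    (∫ x in Set.Ioo (0:ℝ) 1, ∫ y in Set.Ioo (0:ℝ) 1,
        1 / Real.sqrt (x * (1 - x) * y * (1 - z * x * y)))
      = 2 * π * F32 (1/2) (1/2) (1/2) 1 (3/2) z := by
  obtain ⟨hz0, hz1⟩ := hz
  rw [setIntegral_congr_fun measurableSet_Ioo
    (fun x hx => inner_integral hz0 hz1 hx)]
  rw [setIntegral_congr_fun measurableSet_Ioo
    (fun x hx => outer_pointwise hz0 hx)]
  rw [outer_swap hz0 hz1]
  rw [F32, ← tsum_mul_left]
  apply tsum_congr
  intro k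
  rw [poch_one, poch_threehalf]
  have hp := poch_pos (show (0:ℝ) < 1/2 by norm_num) k
  have hkf : (k.factorial : ℝ) ≠ 0 := by positivity
  have h2k : (2*(k:ℝ)+1) ≠ 0 := by positivity
  have hkh : ((k:ℝ) + 1/2) ≠ 0 := by positivity
  rw [bc]
  field_simp
end
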